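/- arXiv:1501.04748 — 2 statements merged into one kernel-verified Lean document; each statement's English description precedes it below -/
import Mathlib

section
/- Let Γ = (C, A, Δ) be a normed BPA system, γ a process, and Rd(γ) = {X ∈ C : Xγ ≃ γ}. Then for every process α, αγ ≃ γ if and only if α ∈ (Rd(γ))*, i.e., every constant occurring in α lies in Rd(γ). -/
open Relation

/-- A BPA system over constants `C` and actions `A`: a distinguished silent
action `tau`, and a finite set of transition rules `X —ℓ→ α`, where `C` and
`A` are finite. -/
structure BPA (C A : Type) where
  tau : A
  rules : Set (C × A × List C)
  finC : Finite C
  finA : Finite A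
  finRules : rules.Finite

namespace BPA

variable {C A : Type}

/-- One-step labelled transition between processes.  Processes are strings
over `C` (lists, with the leftmost constant acting first). -/
def Step (Γ : BPA C A) (ℓ : A) (p q : List C) : Prop :=
  ∃ X γ β, (X, ℓ, γ) ∈ Γ.rules ∧ p = X :: β ∧ q = γ ++ β

/-- A transition carrying an arbitrary label. -/
def AnyStep (Γ : BPA C A) (p q : List C) : Prop := ∃ ℓ, Γ.Step ℓ p q

/-- `⟹` : the reflexive transitive closure of silent steps. -/
def TauStar (Γ : BPA C A) : List C → List C → Prop := ReflTransGen (Γ.Step Γ.tau)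

/-- A process is normed if it can reach the empty process `ε`. -/
def NormedProc (Γ : BPA C A) (p : List C) : Prop := ReflTransGen Γ.AnyStep p []

/-- The BPA system is normed. -/
def Normed (Γ : BPA C A) : Prop := ∀ X : C, Γ.NormedProc [X]

/-- A chain of `s`-steps starting at `start` in which every visited state is
related by `r` to the process `anchor`. -/
def RelChain (s : List C → List C → Prop) (r : List C → List C → Prop)
    (anchor : List C) : List C → List C → Prop :=
  ReflTransGen fun x y => s x y ∧ r anchor y

/-- Branching bisimulation (an equivalence relation by convention). -/
def IsBranchingBisim (Γ : BPA C A) (r : List C → List C → Prop) : Prop :=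
  Equivalence r ∧ ∀ α β, r α β →
    ((∀ a, a ≠ Γ.tau → ∀ α', Γ.Step a α α' →
        ∃ β'' β', RelChain (Γ.Step Γ.tau) r β β β'' ∧ Γ.Step a β'' β' ∧ r α' β') ∧
     (∀ α', Γ.Step Γ.tau α α' → ¬ r α α' →
        ∃ β'' β', RelChain (Γ.Step Γ.tau) r β β β'' ∧ Γ.Step Γ.tau β'' β' ∧
          ¬ r β'' β' ∧ r α' β'))

/-- Branching bisimilarity `≃` : the largest branching bisimulation. -/
def Bisim (Γ : BPA C A) (α β : List C) : Prop :=
  ∃ r, Γ.IsBranchingBisim r ∧ r α β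

/-- A ground process: it can silently reach `ε`. -/
def Ground (Γ : BPA C A) (p : List C) : Prop := Γ.TauStar p []

/-- The set `C_G` of ground constants. -/
def GroundC (Γ : BPA C A) : Set C := {X | Γ.Ground [X]}

/-- `R`-equality `=_R`: the two processes differ only in suffixes over `R`. -/
def REq (R : Set C) (α β : List C) : Prop :=
  ∃ ζ a b, α = ζ ++ a ∧ β = ζ ++ b ∧ (∀ X ∈ a, X ∈ R) ∧ (∀ X ∈ b, X ∈ R)

open Classical in
/-- The `R`-normal form `α_R` of a process: delete the maximal suffix over `R`. -/
noncomputable def nf (R : Set C) (α : List C) : List C :=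
  (α.reverse.dropWhile fun X => decide (X ∈ R)).reverse

/-- A process is in `R`-normal form. -/
def InNF (R : Set C) (α : List C) : Prop := nf R α = α

/-- The `R`-transition relation `—ℓ→_R` between `R`-normal forms. -/
def StepR (Γ : BPA C A) (R : Set C) (ℓ : A) (ζ η : List C) : Prop :=
  ∃ α β, ζ = nf R α ∧ η = nf R β ∧ Γ.Step ℓ α β

/-- `⟹_R`. -/
def TauStarR (Γ : BPA C A) (R : Set C) : List C → List C → Prop :=
  ReflTransGen (Γ.StepR R Γ.tau)

/-- `R`-bisimulation: an equivalence relation containing `=_R` satisfying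
ground preservation and the relativized branching transfer conditions. -/
def IsRBisim (Γ : BPA C A) (R : Set C) (r : List C → List C → Prop) : Prop :=
  Equivalence r ∧ (∀ α β, REq R α β → r α β) ∧
  ∀ α β, r α β →
    ((Γ.TauStar α [] → Γ.TauStar β []) ∧
     (∀ α', Γ.Step Γ.tau α α' → ¬ r α α' →
        ∃ β'' β', RelChain (Γ.StepR R Γ.tau) r β (nf R β) β'' ∧
          Γ.StepR R Γ.tau β'' β' ∧ ¬ r β'' β' ∧ r α' β') ∧
     (∀ a, a ≠ Γ.tau → ∀ α', Γ.Step a α α' →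
        ∃ β'' β', RelChain (Γ.StepR R Γ.tau) r β (nf R β) β'' ∧
          Γ.StepR R a β'' β' ∧ r α' β'))

/-- `R`-bisimilarity `≃_R` : the largest `R`-bisimulation. -/
def RBisim (Γ : BPA C A) (R : Set C) (α β : List C) : Prop :=
  ∃ r, Γ.IsRBisim R r ∧ r α β

/-- `Id_R = {X ∈ C : X ≃_R ε}`. -/
def IdR (Γ : BPA C A) (R : Set C) : Set C := {X | Γ.RBisim R [X] []}

/-- `Rd_R(γ) = {X ∈ C : Xγ ≃_R γ}`. -/
def RdR (Γ : BPA C A) (R : Set C) (γ : List C) : Set C :=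
  {X | Γ.RBisim R (X :: γ) γ}

/-- An admissible reference set: `R = Id_R`. -/
def Admissible (Γ : BPA C A) (R : Set C) : Prop := R = Γ.IdR R

end BPA

/-!
Branching bisimilarity coincides with Basten's semi-branching bisimilarity, which composes
well: it is an equivalence and a left congruence for sequential composition, and this gives
the "if" direction. For "only if", normedness gives every process a branching norm, the least
number of non-inert steps on a path to `ε`, and this norm is invariant under `≃`. If
`Xδγ ≃ γ`, then the norms of `Xδγ`, `δγ` and `γ` force the path from `Xδγ` to `δγ` to be
inert, hence `Xδγ ≃ δγ ≃ γ`, and `Xγ ≃ Xδγ ≃ γ` by congruence.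
-/

namespace BPA

variable {C A : Type} {Γ : BPA C A}

theorem not_step_nil {ℓ : A} {q : List C} : ¬ Γ.Step ℓ [] q := by
  rintro ⟨X, γ, β, _, h, _⟩
  simp at h

theorem eq_nil_of_tauStar_nil {q : List C} (h : Γ.TauStar [] q) : q = [] := by
  rcases h.cases_head with h | ⟨_, hst, _⟩
  · exact h.symm
  · exact absurd hst not_step_nil

theorem exists_rule_of_step_cons {ℓ : A} {X : C} {ρ q : List C} (h : Γ.Step ℓ (X :: ρ) q) :
    ∃ η, (X, ℓ, η) ∈ Γ.rules ∧ q = η ++ ρ := by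
  obtain ⟨X', η, β, hr, he, rfl⟩ := h
  obtain ⟨rfl, rfl⟩ := List.cons.inj he
  exact ⟨η, hr, rfl⟩

theorem Step.append_right {ℓ : A} {u v : List C} (h : Γ.Step ℓ u v) (σ : List C) :
    Γ.Step ℓ (u ++ σ) (v ++ σ) := by
  obtain ⟨X, γ, β, hr, rfl, rfl⟩ := h
  exact ⟨X, γ, β ++ σ, hr, rfl, by simp⟩

theorem RelChain.reflTransGen {s r : List C → List C → Prop} {a x y : List C}
    (h : RelChain s r a x y) : ReflTransGen s x y :=
  ReflTransGen.mono (fun _ _ hxy => hxy.1) _ _ h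

theorem RelChain.rel_anchor {s r : List C → List C → Prop} {a x y : List C}
    (h : RelChain s r a x y) (hx : r a x) : r a y := by
  rcases h.cases_tail with rfl | ⟨_, _, hy⟩
  · exact hx
  · exact hy.2

/-- Unlike in `IsBranchingBisim`, the states passed on `β ⟹ β₀` are not required to be related
to `β`; this is what makes relational composition preserve the property. -/
def IsSemiBranching (Γ : BPA C A) (r : List C → List C → Prop) : Prop :=
  ∀ α β, r α β → ∀ ℓ α', Γ.Step ℓ α α' →
    ∃ β₀, Γ.TauStar β β₀ ∧ r α β₀ ∧
      ((ℓ = Γ.tau ∧ r α' β₀) ∨ ∃ β', Γ.Step ℓ β₀ β' ∧ r α' β')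

def SemiBisim (Γ : BPA C A) (α β : List C) : Prop :=
  ∃ r, Γ.IsSemiBranching r ∧ Γ.IsSemiBranching (flip r) ∧ r α β

theorem IsSemiBranching.tauStar {r : List C → List C → Prop} (hr : Γ.IsSemiBranching r)
    {x x' : List C} (h : Γ.TauStar x x') : ∀ y, r x y → ∃ y', Γ.TauStar y y' ∧ r x' y' := by
  induction h using ReflTransGen.head_induction_on with
  | refl => exact fun y hy => ⟨y, .refl, hy⟩
  | head hst _ ih =>
    intro y hy
    obtain ⟨y₀, hy₀, -, hmove⟩ := hr _ y hy _ _ hst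
    rcases hmove with ⟨-, hrel⟩ | ⟨y', hst', hrel⟩
    · obtain ⟨z, hz, hrz⟩ := ih y₀ hrel
      exact ⟨z, hy₀.trans hz, hrz⟩
    · obtain ⟨z, hz, hrz⟩ := ih y' hrel
      exact ⟨z, (hy₀.tail hst').trans hz, hrz⟩

theorem IsSemiBranching.comp {r₁ r₂ : List C → List C → Prop} (h₁ : Γ.IsSemiBranching r₁)
    (h₂ : Γ.IsSemiBranching r₂) : Γ.IsSemiBranching (Comp r₁ r₂) := by
  rintro α β ⟨μ, hαμ, hμβ⟩ ℓ α' hst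
  obtain ⟨μ₀, hμ₀, hαμ₀, hmove⟩ := h₁ α μ hαμ ℓ α' hst
  obtain ⟨β₁, hβ₁, hμβ₁⟩ := h₂.tauStar hμ₀ β hμβ
  rcases hmove with ⟨hℓ, hα'μ₀⟩ | ⟨μ', hμ', hα'μ'⟩
  · exact ⟨β₁, hβ₁, ⟨μ₀, hαμ₀, hμβ₁⟩, .inl ⟨hℓ, μ₀, hα'μ₀, hμβ₁⟩⟩
  · obtain ⟨β₀, hβ₀, hμβ₀, hmove'⟩ := h₂ μ₀ β₁ hμβ₁ ℓ μ' hμ'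
    refine ⟨β₀, hβ₁.trans hβ₀, ⟨μ₀, hαμ₀, hμβ₀⟩, ?_⟩
    rcases hmove' with ⟨hℓ, hμ'β₀⟩ | ⟨β', hβ', hμ'β'⟩
    · exact .inl ⟨hℓ, μ', hα'μ', hμ'β₀⟩
    · exact .inr ⟨β', hβ', μ', hα'μ', hμ'β'⟩

theorem semiBisim_of_symm {r : List C → List C → Prop} (hr : Γ.IsSemiBranching r)
    (hsymm : ∀ x y, r x y → r y x) {α β : List C} (h : r α β) : Γ.SemiBisim α β := by
  have hflip : flip r = r := funext₂ fun x y => propext ⟨hsymm y x, hsymm x y⟩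
  exact ⟨r, hr, hflip ▸ hr, h⟩

theorem semiBisim_refl (α : List C) : Γ.SemiBisim α α := by
  refine semiBisim_of_symm (r := (· = ·)) ?_ (fun _ _ => Eq.symm) rfl
  rintro α _ rfl ℓ α' hst
  exact ⟨α, .refl, rfl, .inr ⟨α', hst, rfl⟩⟩

theorem SemiBisim.symm {α β : List C} (h : Γ.SemiBisim α β) : Γ.SemiBisim β α := by
  obtain ⟨r, hr, hr', hαβ⟩ := h
  exact ⟨flip r, hr', hr, hαβ⟩

theorem SemiBisim.trans {α β δ : List C} (h : Γ.SemiBisim α β) (h' : Γ.SemiBisim β δ) :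
    Γ.SemiBisim α δ := by
  obtain ⟨r₁, hr₁, hr₁', hαβ⟩ := h
  obtain ⟨r₂, hr₂, hr₂', hβδ⟩ := h'
  exact ⟨Comp r₁ r₂, hr₁.comp hr₂, flip_comp (r := r₁) ▸ hr₂'.comp hr₁', β, hαβ, hβδ⟩

theorem isSemiBranching_semiBisim : Γ.IsSemiBranching Γ.SemiBisim := by
  rintro α β ⟨r, hr, hr', hαβ⟩ ℓ α' hst
  obtain ⟨β₀, hβ₀, hαβ₀, hmove⟩ := hr α β hαβ ℓ α' hst
  refine ⟨β₀, hβ₀, ⟨r, hr, hr', hαβ₀⟩, ?_⟩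
  rcases hmove with ⟨hℓ, hα'β₀⟩ | ⟨β', hβ', hα'β'⟩
  · exact .inl ⟨hℓ, r, hr, hr', hα'β₀⟩
  · exact .inr ⟨β', hβ', r, hr, hr', hα'β'⟩

theorem SemiBisim.of_tauStar_of_tauStar {β y β'' : List C} (h₁ : Γ.TauStar β y)
    (h₂ : Γ.TauStar y β'') (h : Γ.SemiBisim β β'') : Γ.SemiBisim β y := by
  -- Pairs on a silent path into `β''` can be added to `≃`: the right side first runs to `β''`.
  let between (x z : List C) : Prop := Γ.TauStar x z ∧ Γ.TauStar z β'' ∧ Γ.SemiBisim x β''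
  refine semiBisim_of_symm (r := fun x z => Γ.SemiBisim x z ∨ between x z ∨ between z x)
    ?_ ?_ (.inr (.inl ⟨h₁, h₂, h⟩))
  · rintro α γ (hαγ | ⟨-, hγβ'', hαβ''⟩ | ⟨hγα, -, -⟩) ℓ α' hst
    · obtain ⟨γ₀, hγ₀, hαγ₀, hmove⟩ := isSemiBranching_semiBisim α γ hαγ ℓ α' hst
      exact ⟨γ₀, hγ₀, .inl hαγ₀, hmove.imp (And.imp_right .inl)
        fun ⟨γ', hγ', hα'γ'⟩ => ⟨γ', hγ', .inl hα'γ'⟩⟩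
    · obtain ⟨γ₀, hγ₀, hαγ₀, hmove⟩ := isSemiBranching_semiBisim α β'' hαβ'' ℓ α' hst
      exact ⟨γ₀, hγβ''.trans hγ₀, .inl hαγ₀, hmove.imp (And.imp_right .inl)
        fun ⟨γ', hγ', hα'γ'⟩ => ⟨γ', hγ', .inl hα'γ'⟩⟩
    · exact ⟨α, hγα, .inl (semiBisim_refl α), .inr ⟨α', hst, .inl (semiBisim_refl α')⟩⟩
  · rintro x z (hxz | hxz | hzx)
    exacts [.inl hxz.symm, .inr (.inr hxz), .inr (.inl hzx)]

theorem relChain_of_tauStar {β β'' : List C} (h : Γ.TauStar β β'')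
    (hs : Γ.SemiBisim β β'') : RelChain (Γ.Step Γ.tau) Γ.SemiBisim β β β'' := by
  suffices ∀ x, Γ.TauStar x β'' → Γ.TauStar β x → RelChain (Γ.Step Γ.tau) Γ.SemiBisim β x β'' from
    this β h .refl
  intro x hx
  induction hx using ReflTransGen.head_induction_on with
  | refl => exact fun _ => .refl
  | head hst hrest ih =>
    intro hβx
    have hβy := hβx.tail hst
    exact .head ⟨hst, .of_tauStar_of_tauStar hβy hrest hs⟩ (ih hβy)

theorem isBranchingBisim_semiBisim : Γ.IsBranchingBisim Γ.SemiBisim := by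
  refine ⟨⟨semiBisim_refl, .symm, .trans⟩, fun α β hαβ => ⟨?_, ?_⟩⟩
  · intro a ha α' hst
    obtain ⟨β₀, hβ₀, hαβ₀, hmove⟩ := isSemiBranching_semiBisim α β hαβ a α' hst
    obtain ⟨β', hβ', hα'β'⟩ := hmove.resolve_left fun h => ha h.1
    exact ⟨β₀, β', relChain_of_tauStar hβ₀ (hαβ.symm.trans hαβ₀), hβ', hα'β'⟩
  · intro α' hst hinert
    obtain ⟨β₀, hβ₀, hαβ₀, hmove⟩ := isSemiBranching_semiBisim α β hαβ Γ.tau α' hst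
    obtain ⟨β', hβ', hα'β'⟩ :=
      hmove.resolve_left fun h => hinert (hαβ₀.trans h.2.symm)
    exact ⟨β₀, β', relChain_of_tauStar hβ₀ (hαβ.symm.trans hαβ₀), hβ',
      fun h => hinert ((hαβ₀.trans h).trans hα'β'.symm), hα'β'⟩

theorem IsBranchingBisim.isSemiBranching {r : List C → List C → Prop}
    (h : Γ.IsBranchingBisim r) : Γ.IsSemiBranching r := by
  obtain ⟨hequiv, htransfer⟩ := h
  have reached {β β'' : List C} {α} (hαβ : r α β) (hch : RelChain (Γ.Step Γ.tau) r β β β'') :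
      Γ.TauStar β β'' ∧ r α β'' :=
    ⟨hch.reflTransGen, hequiv.trans hαβ (hch.rel_anchor (hequiv.refl β))⟩
  intro α β hαβ ℓ α' hst
  by_cases hℓ : ℓ = Γ.tau
  · subst hℓ
    by_cases hinert : r α α'
    · exact ⟨β, .refl, hαβ, .inl ⟨rfl, hequiv.trans (hequiv.symm hinert) hαβ⟩⟩
    · obtain ⟨β'', β', hch, hβ', -, hα'β'⟩ := (htransfer α β hαβ).2 α' hst hinert
      exact ⟨β'', (reached hαβ hch).1, (reached hαβ hch).2, .inr ⟨β', hβ', hα'β'⟩⟩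
  · obtain ⟨β'', β', hch, hβ', hα'β'⟩ := (htransfer α β hαβ).1 ℓ hℓ α' hst
    exact ⟨β'', (reached hαβ hch).1, (reached hαβ hch).2, .inr ⟨β', hβ', hα'β'⟩⟩

theorem bisim_iff_semiBisim {α β : List C} : Γ.Bisim α β ↔ Γ.SemiBisim α β :=
  ⟨fun ⟨_, hr, hαβ⟩ => semiBisim_of_symm hr.isSemiBranching (fun _ _ => hr.1.symm) hαβ,
    fun h => ⟨_, isBranchingBisim_semiBisim, h⟩⟩

theorem SemiBisim.append_left (δ : List C) {p q : List C} (h : Γ.SemiBisim p q) :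
    Γ.SemiBisim (δ ++ p) (δ ++ q) := by
  refine semiBisim_of_symm (r := fun x y => ∃ δ p q, Γ.SemiBisim p q ∧ x = δ ++ p ∧ y = δ ++ q)
    ?_ ?_ ⟨δ, p, q, h, rfl, rfl⟩
  · rintro _ _ ⟨δ, p, q, hpq, rfl, rfl⟩ ℓ α' hst
    cases δ with
    | nil =>
      obtain ⟨q₀, hq₀, hpq₀, hmove⟩ := isSemiBranching_semiBisim p q hpq ℓ α' hst
      refine ⟨q₀, hq₀, ⟨[], p, q₀, hpq₀, rfl, rfl⟩, ?_⟩
      rcases hmove with ⟨hℓ, hα'q₀⟩ | ⟨q', hq', hα'q'⟩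
      · exact .inl ⟨hℓ, [], α', q₀, hα'q₀, rfl, rfl⟩
      · exact .inr ⟨q', hq', [], α', q', hα'q', rfl, rfl⟩
    | cons X δ =>
      obtain ⟨η, hrule, rfl⟩ := exists_rule_of_step_cons hst
      exact ⟨_, .refl, ⟨X :: δ, p, q, hpq, rfl, rfl⟩,
        .inr ⟨η ++ (δ ++ q), ⟨X, η, δ ++ q, hrule, rfl, rfl⟩, η ++ δ, p, q, hpq, by simp, by simp⟩⟩
  · rintro _ _ ⟨δ, p, q, hpq, rfl, rfl⟩
    exact ⟨δ, q, p, hpq.symm, rfl, rfl⟩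

/-- `CostReach w p c`: some path leads from `p` to `w` with `c` steps counted as non-inert;
a silent step between semi-bisimilar processes may be counted as `0`. -/
inductive CostReach (Γ : BPA C A) (w : List C) : List C → ℕ → Prop
  | refl : CostReach Γ w w 0
  | inert {p p' c} : Γ.Step Γ.tau p p' → Γ.SemiBisim p p' → CostReach Γ w p' c →
      CostReach Γ w p c
  | step {ℓ p p' c} : Γ.Step ℓ p p' → CostReach Γ w p' c → CostReach Γ w p (c + 1)

theorem Normed.normedProc (hΓ : Γ.Normed) (p : List C) : Γ.NormedProc p := by
  induction p with
  | nil => exact .refl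
  | cons X p ih =>
    have hX : ReflTransGen Γ.AnyStep ([X] ++ p) ([] ++ p) :=
      (hΓ X).lift (· ++ p) fun _ _ ⟨ℓ, hst⟩ => ⟨ℓ, hst.append_right p⟩
    exact hX.trans ih

theorem Normed.exists_costReach (hΓ : Γ.Normed) (p : List C) : ∃ c, Γ.CostReach [] p c := by
  induction hΓ.normedProc p using ReflTransGen.head_induction_on with
  | refl => exact ⟨0, .refl⟩
  | head hst _ ih =>
    obtain ⟨ℓ, hst⟩ := hst
    obtain ⟨c, hc⟩ := ih
    exact ⟨c + 1, .step hst hc⟩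

theorem CostReach.split_append {p : List C} {c : ℕ} (h : Γ.CostReach [] p c) :
    ∀ δ σ, p = δ ++ σ → ∃ c₁ c₂, c = c₁ + c₂ ∧ Γ.CostReach σ p c₁ ∧ Γ.CostReach [] σ c₂ := by
  induction h with
  | refl =>
    intro δ σ hp
    obtain ⟨rfl, rfl⟩ := List.append_eq_nil_iff.mp hp.symm
    exact ⟨0, 0, rfl, .refl, .refl⟩
  | @inert p p' c hst hs hc ih =>
    rintro (_ | ⟨X, δ⟩) σ rfl
    · exact ⟨0, c, by simp, .refl, .inert hst hs hc⟩
    · obtain ⟨η, -, rfl⟩ := exists_rule_of_step_cons hst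
      obtain ⟨c₁, c₂, rfl, h₁, h₂⟩ := ih (η ++ δ) σ (by simp)
      exact ⟨c₁, c₂, rfl, .inert hst hs h₁, h₂⟩
  | @step ℓ p p' c hst hc ih =>
    rintro (_ | ⟨X, δ⟩) σ rfl
    · exact ⟨0, c + 1, by simp, .refl, .step hst hc⟩
    · obtain ⟨η, -, rfl⟩ := exists_rule_of_step_cons hst
      obtain ⟨c₁, c₂, rfl, h₁, h₂⟩ := ih (η ++ δ) σ (by simp)
      exact ⟨c₁ + 1, c₂, by omega, .step hst h₁, h₂⟩

theorem CostReach.semiBisim_of_eq_zero {w p : List C} {c : ℕ} (h : Γ.CostReach w p c)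
    (hc : c = 0) : Γ.SemiBisim p w := by
  induction h with
  | refl => exact semiBisim_refl w
  | inert _ hs _ ih => exact hs.trans (ih hc)
  | step _ _ _ => omega

theorem CostReach.of_tauStar {w u u₀ : List C} {c : ℕ} (h : Γ.TauStar u u₀)
    (hs : Γ.SemiBisim u u₀) (hc : Γ.CostReach w u₀ c) : Γ.CostReach w u c := by
  have hch := relChain_of_tauStar h hs
  suffices ∀ x, RelChain (Γ.Step Γ.tau) Γ.SemiBisim u x u₀ → Γ.SemiBisim u x →
      Γ.CostReach w x c from this u hch (semiBisim_refl u)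
  intro x hx
  induction hx using ReflTransGen.head_induction_on with
  | refl => exact fun _ => hc
  | head hst _ ih => exact fun hux => .inert hst.1 (hux.symm.trans hst.2) (ih hst.2)

theorem Normed.costReach_zero_of_semiBisim_nil (hΓ : Γ.Normed) {u : List C}
    (h : Γ.SemiBisim u []) : Γ.CostReach [] u 0 := by
  induction hΓ.normedProc u using ReflTransGen.head_induction_on with
  | refl => exact .refl
  | head hst _ ih =>
    obtain ⟨ℓ, hst⟩ := hst
    obtain ⟨β₀, hβ₀, -, hmove⟩ := isSemiBranching_semiBisim _ [] h ℓ _ hst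
    obtain rfl := eq_nil_of_tauStar_nil hβ₀
    rcases hmove with ⟨rfl, hnil⟩ | ⟨_, hst', _⟩
    · exact .inert hst (h.trans hnil.symm) (ih hnil)
    · exact absurd hst' not_step_nil

theorem Normed.exists_costReach_le_of_semiBisim (hΓ : Γ.Normed) {v : List C} {c : ℕ}
    (h : Γ.CostReach [] v c) : ∀ u, Γ.SemiBisim u v → ∃ c' ≤ c, Γ.CostReach [] u c' := by
  induction h with
  | refl => exact fun u hu => ⟨0, le_rfl, hΓ.costReach_zero_of_semiBisim_nil hu⟩
  | inert _ hs _ ih => exact fun u hu => ih u (hu.trans hs)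
  | @step ℓ v v' c hst _ ih =>
    intro u hu
    obtain ⟨u₀, hu₀, hvu₀, hmove⟩ := isSemiBranching_semiBisim v u hu.symm ℓ v' hst
    have huu₀ : Γ.SemiBisim u u₀ := hu.trans hvu₀
    rcases hmove with ⟨-, hv'u₀⟩ | ⟨u', hu', hv'u'⟩
    · obtain ⟨c', hle, hc'⟩ := ih u₀ hv'u₀.symm
      exact ⟨c', by omega, .of_tauStar hu₀ huu₀ hc'⟩
    · obtain ⟨c', hle, hc'⟩ := ih u' hv'u'.symm
      exact ⟨c' + 1, by omega, .of_tauStar hu₀ huu₀ (.step hu' hc')⟩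

/-- Junk value `0` when `p` cannot reach `ε`. -/
noncomputable def branchingNorm (Γ : BPA C A) (p : List C) : ℕ :=
  sInf {c | Γ.CostReach [] p c}

theorem Normed.costReach_branchingNorm (hΓ : Γ.Normed) (p : List C) :
    Γ.CostReach [] p (Γ.branchingNorm p) :=
  Nat.sInf_mem (hΓ.exists_costReach p)

theorem branchingNorm_le {p : List C} {c : ℕ} (h : Γ.CostReach [] p c) :
    Γ.branchingNorm p ≤ c :=
  Nat.sInf_le h

theorem Normed.branchingNorm_le_of_semiBisim (hΓ : Γ.Normed) {u v : List C}
    (h : Γ.SemiBisim u v) : Γ.branchingNorm u ≤ Γ.branchingNorm v := by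
  obtain ⟨c, hle, hc⟩ := hΓ.exists_costReach_le_of_semiBisim (hΓ.costReach_branchingNorm v) u h
  exact (branchingNorm_le hc).trans hle

theorem Normed.branchingNorm_le_append (hΓ : Γ.Normed) (δ σ : List C) :
    Γ.branchingNorm σ ≤ Γ.branchingNorm (δ ++ σ) := by
  obtain ⟨c₁, c₂, hsum, -, hσ⟩ := (hΓ.costReach_branchingNorm (δ ++ σ)).split_append δ σ rfl
  have := branchingNorm_le hσ
  omega

theorem Normed.semiBisim_of_cons_append (hΓ : Γ.Normed) {X : C} {δ γ : List C}
    (h : Γ.SemiBisim (X :: (δ ++ γ)) γ) : Γ.SemiBisim (X :: (δ ++ γ)) (δ ++ γ) := by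
  obtain ⟨c₁, c₂, hsum, hhead, htail⟩ :=
    (hΓ.costReach_branchingNorm (X :: (δ ++ γ))).split_append [X] (δ ++ γ) rfl
  have hXδγ := hΓ.branchingNorm_le_of_semiBisim h
  have hγ := hΓ.branchingNorm_le_append δ γ
  have hδγ := branchingNorm_le htail
  exact hhead.semiBisim_of_eq_zero (by omega)

theorem Normed.semiBisim_cons_append_iff (hΓ : Γ.Normed) {X : C} {α γ : List C} :
    Γ.SemiBisim (X :: (α ++ γ)) γ ↔ Γ.SemiBisim (X :: γ) γ ∧ Γ.SemiBisim (α ++ γ) γ := by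
  have hcongr (h : Γ.SemiBisim (α ++ γ) γ) : Γ.SemiBisim (X :: (α ++ γ)) (X :: γ) :=
    h.append_left [X]
  constructor
  · intro h
    have hα := (hΓ.semiBisim_of_cons_append h).symm.trans h
    exact ⟨(hcongr hα).symm.trans h, hα⟩
  · exact fun ⟨hX, hα⟩ => (hcongr hα).trans hX

end BPA

/-- For a process `γ`, `αγ ≃ γ` iff every constant of `α` lies in
`Rd(γ) = {X : Xγ ≃ γ}`. -/
theorem redundant_constants {C A : Type} (Γ : BPA C A) (hΓ : Γ.Normed)
    (γ α : List C) :
    Γ.Bisim (α ++ γ) γ ↔ ∀ X ∈ α, X ∈ {X : C | Γ.Bisim (X :: γ) γ} := by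
  simp only [Set.mem_ofPred_eq, BPA.bisim_iff_semiBisim]
  induction α with
  | nil => simp [BPA.semiBisim_refl]
  | cons X α ih => rw [List.cons_append, hΓ.semiBisim_cons_append_iff, ih, List.forall_mem_cons]
end

section
/- Let Γ = (C, A, Δ) be a normed BPA system, R ⊆ C_G, and Id_R = {X ∈ C : X ≃_R ε}. Then for every process α: α ≃_R ε if and only if α ∈ (Id_R)*, i.e., every constant occurring in α lies in Id_R. -/
open Relation

/-!
Two properties of `≃_R` carry the argument. First, a suffix `x ≃_R ε` can be absorbed:
`z ++ x ≃_R z`. The equivalence generated by `≃_R` and such absorptions is again an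
`R`-bisimulation: `z` replays an answer of `z ++ x` until the prefix is used up, after which
`x ≃_R ε` takes over; conversely `z ++ x` replays `z`, silently discarding a leftover suffix
over `R ⊆ C_G` before handing over to `x`. Second, stuttering: along a silent path
`σ ⟹ s ⟹ ε` with `σ ≃_R ε`, all states bisimilar to a stage of the path can be merged into
one class, so `s ≃_R ε`. Now `X :: t ≃_R ε` forces `X :: t ⟹ t ⟹ ε`, hence `t ≃_R ε` and
`X ≃_R X :: t ≃_R ε`; conversely `X :: t ≃_R X ≃_R ε`. Transitivity of `≃_R` itself comes from
the same closure argument.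
-/

theorem Relation.equivalence_reflTransGen {α : Type*} {L : α → α → Prop}
    (hL : ∀ a b, L a b → L b a) : Equivalence (ReflTransGen L) :=
  haveI : Std.Symm L := ⟨hL⟩
  ⟨fun _ => .refl, fun h => Std.Symm.symm _ _ h, .trans⟩

namespace BPA

variable {C A : Type}

section NormalForm

variable {R : Set C}

theorem nf_append_of_forall_mem (x : List C) {ρ : List C} (hρ : ∀ X ∈ ρ, X ∈ R) :
    nf R (x ++ ρ) = nf R x := by
  rw [nf, nf, List.reverse_append, List.dropWhile_append_of_pos (by simpa using hρ)]

theorem nf_append_of_nf_ne_nil (x : List C) {w : List C} (hw : nf R w ≠ []) :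
    nf R (x ++ w) = x ++ nf R w := by
  simp only [nf] at hw ⊢
  rw [List.reverse_append, List.dropWhile_append, if_neg (by simpa using hw),
    List.reverse_append, List.reverse_reverse]

theorem nf_nf (x : List C) : nf R (nf R x) = nf R x := by
  simp only [nf, List.reverse_reverse, List.dropWhile_idempotent]

theorem exists_eq_nf_append (x : List C) : ∃ ρ, (∀ X ∈ ρ, X ∈ R) ∧ x = nf R x ++ ρ := by
  classical
  refine ⟨x.rtakeWhile fun X => decide (X ∈ R), fun X hX => ?_, ?_⟩
  · simpa using List.mem_rtakeWhile_imp hX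
  · exact List.rdropWhile_append_rtakeWhile.symm

theorem nf_eq_nil_iff {x : List C} : nf R x = [] ↔ ∀ X ∈ x, X ∈ R := by
  simp [nf, List.dropWhile_eq_nil_iff]

theorem REq_iff_nf_eq {a b : List C} : REq R a b ↔ nf R a = nf R b := by
  constructor
  · rintro ⟨ζ, u, v, rfl, rfl, hu, hv⟩
    rw [nf_append_of_forall_mem _ hu, nf_append_of_forall_mem _ hv]
  · intro h
    obtain ⟨ρ, hρ, ha⟩ := exists_eq_nf_append (R := R) a
    obtain ⟨σ, hσ, hb⟩ := exists_eq_nf_append (R := R) b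
    exact ⟨nf R a, ρ, σ, ha, h ▸ hb, hρ, hσ⟩

theorem REq_nf (a : List C) : REq R a (nf R a) :=
  REq_iff_nf_eq.2 (nf_nf a).symm

theorem InNF.append {w : List C} (hw : InNF R w) (hne : w ≠ []) (x : List C) :
    InNF R (x ++ w) := by
  unfold InNF at hw ⊢
  rw [nf_append_of_nf_ne_nil x (by rwa [hw]), hw]

end NormalForm

section Steps

variable {Γ : BPA C A}

theorem step_cons_iff {ℓ : A} {X : C} {t b : List C} :
    Γ.Step ℓ (X :: t) b ↔ ∃ g, (X, ℓ, g) ∈ Γ.rules ∧ b = g ++ t := by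
  constructor
  · rintro ⟨Y, g, β, hr, he, rfl⟩
    obtain ⟨rfl, rfl⟩ := List.cons.inj he
    exact ⟨g, hr, rfl⟩
  · rintro ⟨g, hr, rfl⟩
    exact ⟨X, g, t, hr, rfl, rfl⟩

theorem Step.append {ℓ : A} {a b : List C} (h : Γ.Step ℓ a b) (c : List C) :
    Γ.Step ℓ (a ++ c) (b ++ c) := by
  obtain ⟨X, γ, β, hr, rfl, rfl⟩ := h
  exact ⟨X, γ, β ++ c, hr, rfl, by simp⟩

theorem Step.of_append {ℓ : A} {u x y : List C} (h : Γ.Step ℓ (u ++ x) y) (hu : u ≠ []) :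
    ∃ u', Γ.Step ℓ u u' ∧ y = u' ++ x := by
  obtain ⟨X, t, rfl⟩ := List.exists_cons_of_ne_nil hu
  obtain ⟨g, hr, rfl⟩ := step_cons_iff.1 h
  exact ⟨g ++ t, step_cons_iff.2 ⟨g, hr, rfl⟩, by simp⟩

theorem TauStar.append {a b : List C} (h : Γ.TauStar a b) (c : List C) :
    Γ.TauStar (a ++ c) (b ++ c) := by
  induction h with
  | refl => exact ReflTransGen.refl
  | tail _ hst ih => exact ih.tail (hst.append c)

theorem ground_append_iff {a b : List C} :
    Γ.Ground (a ++ b) ↔ Γ.Ground a ∧ Γ.Ground b := by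
  constructor
  · intro h
    generalize hz : a ++ b = z at h
    induction h using ReflTransGen.head_induction_on generalizing a with
    | refl =>
      obtain ⟨rfl, rfl⟩ := List.append_eq_nil_iff.1 hz
      exact ⟨ReflTransGen.refl, ReflTransGen.refl⟩
    | head hst htail ih =>
      subst hz
      rcases a with _ | ⟨X, a⟩
      · exact ⟨ReflTransGen.refl, ReflTransGen.head hst htail⟩
      · obtain ⟨g, hr, hg⟩ := step_cons_iff.1 hst
        obtain ⟨hga, hb⟩ := ih (a := g ++ a) (by simp [hg])
        exact ⟨ReflTransGen.head (step_cons_iff.2 ⟨g, hr, rfl⟩) hga, hb⟩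
  · rintro ⟨ha, hb⟩
    exact ReflTransGen.trans (TauStar.append ha b) hb

theorem ground_iff_forall_mem {ρ : List C} : Γ.Ground ρ ↔ ∀ X ∈ ρ, X ∈ Γ.GroundC := by
  induction ρ with
  | nil => exact iff_of_true ReflTransGen.refl (by simp)
  | cons X t ih =>
    rw [← List.singleton_append, ground_append_iff, ih]
    simp [GroundC]

theorem ground_nf_iff {R : Set C} (hR : R ⊆ Γ.GroundC) (x : List C) :
    Γ.Ground (nf R x) ↔ Γ.Ground x := by
  obtain ⟨ρ, hρ, hx⟩ := exists_eq_nf_append (R := R) x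
  conv_rhs => rw [hx]
  rw [ground_append_iff, and_iff_left (ground_iff_forall_mem.2 fun X h => hR (hρ X h))]

end Steps

section StepR

variable {Γ : BPA C A} {R : Set C}

theorem stepR_of_step {ℓ : A} {a b : List C} (h : Γ.Step ℓ a b) :
    Γ.StepR R ℓ (nf R a) (nf R b) :=
  ⟨a, b, rfl, rfl, h⟩

theorem StepR.inNF_right {ℓ : A} {u v : List C} (h : Γ.StepR R ℓ u v) : InNF R v := by
  obtain ⟨-, b, -, rfl, -⟩ := h
  exact nf_nf b

theorem StepR.exists_step {ℓ : A} {z v : List C} (h : Γ.StepR R ℓ (nf R z) v)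
    (hz : nf R z ≠ []) : ∃ z', Γ.Step ℓ z z' ∧ v = nf R z' := by
  obtain ⟨a, b, ha, rfl, hab⟩ := h
  obtain ⟨ρa, hρa, ha'⟩ := exists_eq_nf_append (R := R) a
  obtain ⟨ρz, hρz, hz'⟩ := exists_eq_nf_append (R := R) z
  rw [← ha] at ha'
  rw [ha'] at hab
  obtain ⟨u', hu', rfl⟩ := hab.of_append hz
  refine ⟨u' ++ ρz, by rw [hz']; exact hu'.append ρz, ?_⟩
  rw [nf_append_of_forall_mem _ hρa, nf_append_of_forall_mem _ hρz]

theorem stepR_append_of_step {ℓ : A} {u u' w : List C} (hw : InNF R w) (hne : w ≠ [])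
    (h : Γ.Step ℓ u u') : Γ.StepR R ℓ (u ++ w) (u' ++ w) :=
  ⟨u ++ w, u' ++ w, Eq.symm (hw.append hne u), Eq.symm (hw.append hne u'), h.append w⟩

variable (Γ R) in
def TauChainR (P : List C → Prop) : List C → List C → Prop :=
  ReflTransGen fun x y => Γ.StepR R Γ.tau x y ∧ P y

variable (Γ R) in
/-- The shape of the answers required in clauses (2) and (3) of an `R`-bisimulation. -/
inductive WeakStepR (P : List C → Prop) (ℓ : A) (Q : List C → Prop) : List C → Prop
  | step {s v : List C} : Γ.StepR R ℓ s v → Q v → WeakStepR P ℓ Q s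
  | tau {s s' : List C} : Γ.StepR R Γ.tau s s' → P s' → WeakStepR P ℓ Q s' → WeakStepR P ℓ Q s

variable {P Q : List C → Prop} {ℓ : A}

theorem TauChainR.mono {P' : List C → Prop} (hPP' : ∀ y, P y → P' y) {a b : List C}
    (h : Γ.TauChainR R P a b) : Γ.TauChainR R P' a b :=
  ReflTransGen.mono (fun _ _ hxy => ⟨hxy.1, hPP' _ hxy.2⟩) a b h

theorem TauChainR.last {a b : List C} (h : Γ.TauChainR R P a b) (ha : P a) : P b := by
  induction h with
  | refl => exact ha
  | tail _ hbc _ => exact hbc.2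

theorem WeakStepR.of_tauChainR {s s' : List C} (hc : Γ.TauChainR R P s s')
    (h : Γ.WeakStepR R P ℓ Q s') : Γ.WeakStepR R P ℓ Q s := by
  induction hc using ReflTransGen.head_induction_on with
  | refl => exact h
  | head hst _ ih => exact .tau hst.1 hst.2 ih

theorem WeakStepR.exists_tauChainR {s : List C} (h : Γ.WeakStepR R P ℓ Q s) :
    ∃ w v, Γ.TauChainR R P s w ∧ Γ.StepR R ℓ w v ∧ Q v := by
  induction h with
  | step hsv hv => exact ⟨_, _, ReflTransGen.refl, hsv, hv⟩
  | tau hss' hs' _ ih =>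
    obtain ⟨w, v, hc, hwv, hv⟩ := ih
    exact ⟨w, v, ReflTransGen.head ⟨hss', hs'⟩ hc, hwv, hv⟩

end StepR

section RBisimulation

variable {Γ : BPA C A} {R : Set C}

theorem IsRBisim.rel_nf {r : List C → List C → Prop} (hr : Γ.IsRBisim R r) (x : List C) :
    r x (nf R x) :=
  hr.2.1 _ _ (REq_nf x)

theorem IsRBisim.match_stepR {r : List C → List C → Prop} (hr : Γ.IsRBisim R r)
    {s d v : List C} {ℓ : A} (hsd : r s d) (hd : InNF R d) (h : Γ.StepR R ℓ s v) :
    (ℓ = Γ.tau ∧ r v d) ∨ ∃ d₁ d₂, Γ.TauChainR R (r d) d d₁ ∧ Γ.StepR R ℓ d₁ d₂ ∧ r v d₂ := by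
  obtain ⟨a, b, rfl, rfl, hab⟩ := h
  have had : r a d := hr.1.trans (hr.rel_nf a) hsd
  have hbb : r (nf R b) b := hr.1.symm (hr.rel_nf b)
  unfold InNF at hd
  by_cases hτ : ℓ = Γ.tau
  · subst hτ
    by_cases hinert : r a b
    · exact .inl ⟨rfl, hr.1.trans hbb (hr.1.trans (hr.1.symm hinert) had)⟩
    · obtain ⟨d₁, d₂, hc, hd₁d₂, -, hbd₂⟩ := (hr.2.2 a d had).2.1 b hab hinert
      rw [hd] at hc
      exact .inr ⟨d₁, d₂, hc, hd₁d₂, hr.1.trans hbb hbd₂⟩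
  · obtain ⟨d₁, d₂, hc, hd₁d₂, hbd₂⟩ := (hr.2.2 a d had).2.2 ℓ hτ b hab
    rw [hd] at hc
    exact .inr ⟨d₁, d₂, hc, hd₁d₂, hr.1.trans hbb hbd₂⟩

/-- `hleave` excludes the one answer an `r`-link cannot carry over: answering a silent
challenge by staying put. -/
theorem IsRBisim.transfer {r p : List C → List C → Prop} (hr : Γ.IsRBisim R r)
    (hp : Equivalence p) (hrp : ∀ a b, r a b → p a b) {a b B α' : List C} {ℓ : A}
    (hleave : ℓ = Γ.tau → ¬ p B α') (hab : r a b) (hBb : p B b)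
    (h : Γ.WeakStepR R (p B) ℓ (p α') (nf R a)) : Γ.WeakStepR R (p B) ℓ (p α') (nf R b) := by
  have hγδ : r (nf R a) (nf R b) :=
    hr.1.trans (hr.1.symm (hr.rel_nf a)) (hr.1.trans hab (hr.rel_nf b))
  have hBδ : p B (nf R b) := hp.trans hBb (hrp _ _ (hr.rel_nf b))
  have hδ : InNF R (nf R b) := nf_nf b
  generalize nf R a = γ at h hγδ
  generalize nf R b = δ at hγδ hBδ hδ
  induction h generalizing δ with
  | step hsv hv =>
    rcases hr.match_stepR hγδ hδ hsv with ⟨hτ, hvδ⟩ | ⟨d₁, d₂, hc, hd₁d₂, hvd₂⟩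
    · exact absurd (hp.trans hBδ (hp.symm (hp.trans hv (hrp _ _ hvδ)))) (hleave hτ)
    · exact .of_tauChainR (hc.mono fun y hy => hp.trans hBδ (hrp _ _ hy))
        (.step hd₁d₂ (hp.trans hv (hrp _ _ hvd₂)))
  | tau hss' hs' _ ih =>
    rcases hr.match_stepR hγδ hδ hss' with ⟨-, hs'δ⟩ | ⟨d₁, d₂, hc, hd₁d₂, hs'd₂⟩
    · exact ih δ hs'δ hBδ hδ
    · have hBd₂ : p B d₂ := hp.trans hs' (hrp _ _ hs'd₂)
      exact .of_tauChainR (hc.mono fun y hy => hp.trans hBδ (hrp _ _ hy))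
        (.tau hd₁d₂ hBd₂ (ih d₂ hs'd₂ hBd₂ hd₁d₂.inNF_right))

theorem isRBisim_reflTransGen {L : List C → List C → Prop} (hL : ∀ a b, L a b → L b a)
    (hREq : ∀ a b, REq R a b → L a b)
    (hground : ∀ a b, L a b → Γ.Ground a → Γ.Ground b)
    (htransfer : ∀ {a b B α' : List C} {ℓ : A}, L a b → ReflTransGen L b B →
      (ℓ = Γ.tau → ¬ ReflTransGen L B α') →
      Γ.WeakStepR R (ReflTransGen L B) ℓ (ReflTransGen L α') (nf R a) →
      Γ.WeakStepR R (ReflTransGen L B) ℓ (ReflTransGen L α') (nf R b)) :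
    Γ.IsRBisim R (ReflTransGen L) := by
  have hp : Equivalence (ReflTransGen L) := Relation.equivalence_reflTransGen hL
  have hnf : ∀ x, ReflTransGen L x (nf R x) := fun x => .single (hREq _ _ (REq_nf x))
  have answer : ∀ {α B α' : List C} {ℓ : A}, ReflTransGen L α B → Γ.Step ℓ α α' →
      (ℓ = Γ.tau → ¬ ReflTransGen L B α') →
      Γ.WeakStepR R (ReflTransGen L B) ℓ (ReflTransGen L α') (nf R B) := by
    intro α B α' ℓ hαB hst hleave
    have start : Γ.WeakStepR R (ReflTransGen L B) ℓ (ReflTransGen L α') (nf R α) :=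
      .step (stepR_of_step hst) (hnf α')
    clear hst
    induction hαB using ReflTransGen.head_induction_on with
    | refl => exact start
    | head hab hbB ih => exact ih (htransfer hab hbB hleave start)
  refine ⟨hp, fun a b h => .single (hREq a b h), fun α B hαB => ⟨?_, ?_, ?_⟩⟩
  · intro hg
    induction hαB with
    | refl => exact hg
    | tail _ hbc ih => exact hground _ _ hbc ih
  · intro α' hst hne
    have hleave : Γ.tau = Γ.tau → ¬ ReflTransGen L B α' := fun _ hBα' => hne (hp.trans hαB hBα')
    obtain ⟨w, v, hc, hwv, hv⟩ := (answer hαB hst hleave).exists_tauChainR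
    have hBw : ReflTransGen L B w := hc.last (hnf B)
    exact ⟨w, v, hc, hwv, fun hw => hleave rfl (hp.trans hBw (hp.trans hw (hp.symm hv))), hv⟩
  · intro ℓ hℓ α' hst
    exact (answer hαB hst fun h => absurd h hℓ).exists_tauChainR

theorem isRBisim_reflTransGen_nf_eq (hR : R ⊆ Γ.GroundC) :
    Γ.IsRBisim R (ReflTransGen fun a b => nf R a = nf R b) :=
  isRBisim_reflTransGen (fun _ _ => Eq.symm) (fun _ _ => REq_iff_nf_eq.1)
    (fun a b h ha => (ground_nf_iff hR b).1 (h ▸ (ground_nf_iff hR a).2 ha))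
    fun h _ _ hd => h ▸ hd

theorem rbisim_of_nf_eq (hR : R ⊆ Γ.GroundC) {a b : List C} (h : nf R a = nf R b) :
    Γ.RBisim R a b :=
  ⟨_, isRBisim_reflTransGen_nf_eq hR, .single h⟩

theorem rbisim_of_REq (hR : R ⊆ Γ.GroundC) {a b : List C} (h : REq R a b) : Γ.RBisim R a b :=
  rbisim_of_nf_eq hR (REq_iff_nf_eq.1 h)

theorem rbisim_refl (hR : R ⊆ Γ.GroundC) (a : List C) : Γ.RBisim R a a :=
  rbisim_of_nf_eq hR rfl

theorem rbisim_nf (hR : R ⊆ Γ.GroundC) (a : List C) : Γ.RBisim R a (nf R a) :=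
  rbisim_of_REq hR (REq_nf a)

theorem RBisim.symm {a b : List C} (h : Γ.RBisim R a b) : Γ.RBisim R b a :=
  let ⟨r, hr, hab⟩ := h
  ⟨r, hr, hr.1.symm hab⟩

theorem RBisim.ground {a b : List C} (h : Γ.RBisim R a b) (ha : Γ.Ground a) : Γ.Ground b :=
  let ⟨_, hr, hab⟩ := h
  (hr.2.2 a b hab).1 ha

theorem RBisim.transfer {p : List C → List C → Prop} (hp : Equivalence p)
    (hRp : ∀ a b, Γ.RBisim R a b → p a b) {a b B α' : List C} {ℓ : A}
    (hleave : ℓ = Γ.tau → ¬ p B α') (hab : Γ.RBisim R a b) (hBb : p B b)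
    (h : Γ.WeakStepR R (p B) ℓ (p α') (nf R a)) : Γ.WeakStepR R (p B) ℓ (p α') (nf R b) :=
  let ⟨r, hr, hab⟩ := hab
  hr.transfer hp (fun x y hxy => hRp x y ⟨r, hr, hxy⟩) hleave hab hBb h

theorem isRBisim_reflTransGen_rbisim (hR : R ⊆ Γ.GroundC) :
    Γ.IsRBisim R (ReflTransGen (Γ.RBisim R)) := by
  have hL : ∀ a b, Γ.RBisim R a b → Γ.RBisim R b a := fun _ _ => RBisim.symm
  have hp := Relation.equivalence_reflTransGen hL
  exact isRBisim_reflTransGen hL (fun _ _ => rbisim_of_REq hR) (fun _ _ => RBisim.ground)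
    fun hab hbB hleave hd => RBisim.transfer hp (fun _ _ => .single) hleave hab (hp.symm hbB) hd

theorem isRBisim_rbisim (hR : R ⊆ Γ.GroundC) : Γ.IsRBisim R (Γ.RBisim R) := by
  have h := isRBisim_reflTransGen_rbisim hR
  have heq : Γ.RBisim R = ReflTransGen (Γ.RBisim R) := by
    ext a b
    exact ⟨.single, fun hab => ⟨_, h, hab⟩⟩
  rwa [← heq] at h

theorem RBisim.trans (hR : R ⊆ Γ.GroundC) {a b c : List C} (hab : Γ.RBisim R a b)
    (hbc : Γ.RBisim R b c) : Γ.RBisim R a c :=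
  (isRBisim_rbisim hR).1.trans hab hbc

end RBisimulation

section Stuttering

variable {Γ : BPA C A} {R : Set C}

theorem exists_tauChainR_of_tauStar (hR : R ⊆ Γ.GroundC) {t t' : List C}
    (htt' : Γ.TauStar t t') {e : List C} (he : InNF R e) (het : Γ.RBisim R e t) :
    ∃ e', Γ.TauChainR R (fun y => ∃ u, Γ.TauStar t u ∧ Γ.TauStar u t' ∧ Γ.RBisim R y u) e e' ∧
      InNF R e' ∧ Γ.RBisim R e' t' := by
  induction htt' using ReflTransGen.head_induction_on generalizing e with
  | refl => exact ⟨e, ReflTransGen.refl, he, het⟩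
  | head hst htail ih =>
    rename_i t c
    have hte : Γ.RBisim R (nf R t) e := (rbisim_nf hR t).symm.trans hR het.symm
    rcases (isRBisim_rbisim hR).match_stepR hte he (stepR_of_step hst) with
      ⟨-, hce⟩ | ⟨d₁, d₂, hc, hd₁d₂, hcd₂⟩
    · obtain ⟨e', hc', he', he't'⟩ := ih he (hce.symm.trans hR (rbisim_nf hR c).symm)
      refine ⟨e', hc'.mono ?_, he', he't'⟩
      rintro y ⟨u, hcu, hut', hyu⟩
      exact ⟨u, ReflTransGen.head hst hcu, hut', hyu⟩
    · obtain ⟨e', hc', he', he't'⟩ :=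
        ih hd₁d₂.inNF_right (hcd₂.symm.trans hR (rbisim_nf hR c).symm)
      refine ⟨e', ReflTransGen.trans (ReflTransGen.tail (hc.mono ?_) ⟨hd₁d₂, ?_⟩) (hc'.mono ?_),
        he', he't'⟩
      · exact fun y hey => ⟨t, ReflTransGen.refl, ReflTransGen.head hst htail,
          hey.symm.trans hR het⟩
      · exact ⟨c, ReflTransGen.single hst, htail, hcd₂.symm.trans hR (rbisim_nf hR c).symm⟩
      · rintro y ⟨u, hcu, hut', hyu⟩
        exact ⟨u, ReflTransGen.head hst hcu, hut', hyu⟩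

theorem rbisim_nil_of_tauStar (hR : R ⊆ Γ.GroundC) {σ s : List C} (hσ : Γ.RBisim R σ [])
    (hσs : Γ.TauStar σ s) (hs : Γ.Ground s) : Γ.RBisim R s [] := by
  -- The states bisimilar to some stage of a silent path `σ ⟹ t ⟹ ε` can be merged into
  -- one class: each of them silently reaches a representative of any other.
  let K : List C → Prop := fun x => ∃ t, Γ.TauStar σ t ∧ Γ.Ground t ∧ Γ.RBisim R x t
  let L : List C → List C → Prop := fun a b => Γ.RBisim R a b ∨ K a ∧ K b
  have hL : ∀ a b, L a b → L b a := fun _ _ => Or.imp RBisim.symm And.symm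
  have hp := Relation.equivalence_reflTransGen hL
  have hLK : ∀ {x y}, K x → K y → ReflTransGen L x y := fun hx hy => .single (.inr ⟨hx, hy⟩)
  have hbisim : Γ.IsRBisim R (ReflTransGen L) := by
    refine isRBisim_reflTransGen hL (fun _ _ h => .inl (rbisim_of_REq hR h)) ?_ ?_
    · rintro a b (hab | ⟨-, t, -, ht, hbt⟩) ha
      · exact hab.ground ha
      · exact hbt.symm.ground ht
    · rintro a b B α' ℓ (hab | ⟨⟨t₁, hσt₁, ht₁, hat₁⟩, hKb⟩) hbB hleave hd
      · exact RBisim.transfer hp (fun _ _ h => .single (.inl h)) hleave hab (hp.symm hbB) hd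
      · obtain ⟨t₂, hσt₂, ht₂, hbt₂⟩ := hKb
        have hBK : ∀ y, K y → ReflTransGen L B y :=
          fun y hy => hp.trans (hp.symm hbB) (hLK ⟨t₂, hσt₂, ht₂, hbt₂⟩ hy)
        obtain ⟨e₁, hc₁, he₁, he₁nil⟩ := exists_tauChainR_of_tauStar hR ht₂ (nf_nf b)
          ((rbisim_nf hR b).symm.trans hR hbt₂)
        obtain ⟨e₂, hc₂, he₂, he₂t₁⟩ :=
          exists_tauChainR_of_tauStar hR hσt₁ he₁ (he₁nil.trans hR hσ.symm)
        have hd₂ := RBisim.transfer hp (fun _ _ h => .single (.inl h)) hleave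
          (hat₁.trans hR he₂t₁.symm) (hBK e₂ ⟨t₁, hσt₁, ht₁, he₂t₁⟩) hd
        rw [show nf R e₂ = e₂ from he₂] at hd₂
        refine .of_tauChainR (ReflTransGen.trans (hc₁.mono ?_) (hc₂.mono ?_)) hd₂
        · rintro y ⟨u, ht₂u, hu, hyu⟩
          exact hBK y ⟨u, hσt₂.trans ht₂u, hu, hyu⟩
        · rintro y ⟨u, hσu, hut₁, hyu⟩
          exact hBK y ⟨u, hσu, hut₁.trans ht₁, hyu⟩
  exact ⟨_, hbisim, hLK ⟨s, hσs, hs, rbisim_refl hR s⟩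
    ⟨[], hσs.trans hs, ReflTransGen.refl, rbisim_refl hR []⟩⟩

theorem tauChainR_append_of_rbisim_nil (hR : R ⊆ Γ.GroundC) {σ w : List C}
    (hσ : Γ.RBisim R σ []) (hσg : Γ.Ground σ) (hw : InNF R w) (hne : w ≠ []) :
    Γ.TauChainR R (fun y => ∃ u, Γ.RBisim R u [] ∧ y = u ++ w) (σ ++ w) w := by
  induction hσg using ReflTransGen.head_induction_on with
  | refl => exact ReflTransGen.refl
  | head hst htail ih =>
    have hσ' := rbisim_nil_of_tauStar hR hσ (ReflTransGen.single hst) htail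
    exact ReflTransGen.head ⟨stepR_append_of_step hw hne hst, _, hσ', rfl⟩ (ih hσ')

end Stuttering

section SuffixAbsorption

variable {Γ : BPA C A} {R : Set C}

theorem StepR.of_append_inNF {ℓ : A} {u x v : List C} (h : Γ.StepR R ℓ (u ++ x) v)
    (hu : u ≠ []) (hx : InNF R x) (hxne : x ≠ []) : ∃ u', Γ.Step ℓ u u' ∧ v = u' ++ x := by
  have hnf : nf R (u ++ x) = u ++ x := hx.append hxne u
  rw [← hnf] at h
  obtain ⟨s', hs', rfl⟩ := h.exists_step (by simp [hnf, hu])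
  obtain ⟨u', hu', rfl⟩ := hs'.of_append hu
  exact ⟨u', hu', hx.append hxne u'⟩

variable (Γ R) in
/-- `x` is kept nonempty and in normal form, so that `b ++ x` is its own `R`-normal form. -/
def AbsorbsSuffix (a b : List C) : Prop :=
  ∃ x, Γ.RBisim R x [] ∧ InNF R x ∧ x ≠ [] ∧ a = b ++ x

variable (Γ R) in
def SuffixLink (a b : List C) : Prop :=
  Γ.RBisim R a b ∨ Γ.AbsorbsSuffix R a b ∨ Γ.AbsorbsSuffix R b a

variable (Γ R) in
abbrev SuffixEquiv : List C → List C → Prop :=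
  ReflTransGen (Γ.SuffixLink R)

theorem suffixLink_symm (a b : List C) : Γ.SuffixLink R a b → Γ.SuffixLink R b a :=
  Or.imp RBisim.symm Or.symm

theorem equivalence_suffixEquiv : Equivalence (Γ.SuffixEquiv R) :=
  Relation.equivalence_reflTransGen suffixLink_symm

theorem SuffixEquiv.of_rbisim {a b : List C} (h : Γ.RBisim R a b) : Γ.SuffixEquiv R a b :=
  .single (.inl h)

theorem suffixEquiv_append {x : List C} (hx : Γ.RBisim R x []) (hxnf : InNF R x)
    (hxne : x ≠ []) (z : List C) : Γ.SuffixEquiv R (z ++ x) z :=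
  .single (.inr (.inl ⟨x, hx, hxnf, hxne, rfl⟩))

section Transfer

variable {x B α' : List C} {ℓ : A}

theorem WeakStepR.nf_of_append (hR : R ⊆ Γ.GroundC) (hx : Γ.RBisim R x [])
    (hxnf : InNF R x) (hxne : x ≠ []) (hleave : ℓ = Γ.tau → ¬ Γ.SuffixEquiv R B α') {z : List C}
    (hBz : Γ.SuffixEquiv R B z)
    (h : Γ.WeakStepR R (Γ.SuffixEquiv R B) ℓ (Γ.SuffixEquiv R α') (z ++ x)) :
    Γ.WeakStepR R (Γ.SuffixEquiv R B) ℓ (Γ.SuffixEquiv R α') (nf R z) := by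
  have hp : Equivalence (Γ.SuffixEquiv R) := equivalence_suffixEquiv
  have hux : ∀ u, Γ.SuffixEquiv R (u ++ x) (nf R u) := fun u =>
    hp.trans (suffixEquiv_append hx hxnf hxne u) (.of_rbisim (rbisim_nf hR u))
  have hnil (hB : Γ.SuffixEquiv R B [])
      (hd : Γ.WeakStepR R (Γ.SuffixEquiv R B) ℓ (Γ.SuffixEquiv R α') x) :
      Γ.WeakStepR R (Γ.SuffixEquiv R B) ℓ (Γ.SuffixEquiv R α') (nf R []) :=
    RBisim.transfer hp (fun _ _ => .of_rbisim) hleave hx hB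
      (by rwa [show nf R x = x from hxnf])
  generalize hs : z ++ x = s at h
  induction h generalizing z with
  | step hsv hv =>
    subst hs
    rcases z with _ | ⟨Z, z⟩
    · exact hnil hBz (.step hsv hv)
    · obtain ⟨u', hu', rfl⟩ := hsv.of_append_inNF (List.cons_ne_nil Z z) hxnf hxne
      exact .step (stepR_of_step hu') (hp.trans hv (hux u'))
  | tau hss' hs' hd ih =>
    subst hs
    rcases z with _ | ⟨Z, z⟩
    · exact hnil hBz (.tau hss' hs' hd)
    · obtain ⟨u', hu', rfl⟩ := hss'.of_append_inNF (List.cons_ne_nil Z z) hxnf hxne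
      exact .tau (stepR_of_step hu') (hp.trans hs' (hux u'))
        (ih (hp.trans hs' (suffixEquiv_append hx hxnf hxne u')) rfl)

theorem WeakStepR.append_of_nf (hR : R ⊆ Γ.GroundC) (hx : Γ.RBisim R x [])
    (hxnf : InNF R x) (hxne : x ≠ []) (hleave : ℓ = Γ.tau → ¬ Γ.SuffixEquiv R B α') {z : List C}
    (hBz : Γ.SuffixEquiv R B (nf R z))
    (h : Γ.WeakStepR R (Γ.SuffixEquiv R B) ℓ (Γ.SuffixEquiv R α') (nf R z)) :
    Γ.WeakStepR R (Γ.SuffixEquiv R B) ℓ (Γ.SuffixEquiv R α') (z ++ x) := by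
  have hp : Equivalence (Γ.SuffixEquiv R) := equivalence_suffixEquiv
  have hux : ∀ u, Γ.SuffixEquiv R (u ++ x) (nf R u) := fun u =>
    hp.trans (suffixEquiv_append hx hxnf hxne u) (.of_rbisim (rbisim_nf hR u))
  -- A prefix over `R` is first consumed silently, then `x ≃_R ε` provides the answer.
  have hnil {z : List C} (hz : nf R z = []) (hB : Γ.SuffixEquiv R B [])
      (hd : Γ.WeakStepR R (Γ.SuffixEquiv R B) ℓ (Γ.SuffixEquiv R α') []) :
      Γ.WeakStepR R (Γ.SuffixEquiv R B) ℓ (Γ.SuffixEquiv R α') (z ++ x) := by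
    have hzR := nf_eq_nil_iff.1 hz
    have hc := tauChainR_append_of_rbisim_nil hR (rbisim_of_nf_eq hR (hz.trans rfl))
      (ground_iff_forall_mem.2 fun X hX => hR (hzR X hX)) hxnf hxne
    refine .of_tauChainR (hc.mono ?_) ?_
    · rintro _ ⟨u, hu, rfl⟩
      exact hp.trans hB (hp.symm (hp.trans (suffixEquiv_append hx hxnf hxne u) (.of_rbisim hu)))
    · have := RBisim.transfer hp (fun _ _ => .of_rbisim) hleave hx.symm
        (hp.trans hB (.of_rbisim hx.symm)) hd
      rwa [show nf R x = x from hxnf] at this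
  generalize hs : nf R z = s at h hBz
  induction h generalizing z with
  | step hsv hv =>
    subst hs
    by_cases hz : nf R z = []
    · exact hnil hz (hz ▸ hBz) (hz ▸ .step hsv hv)
    · obtain ⟨z', hz', rfl⟩ := hsv.exists_step hz
      exact .step (stepR_append_of_step hxnf hxne hz') (hp.trans hv (hp.symm (hux z')))
  | tau hss' hs' hd ih =>
    subst hs
    by_cases hz : nf R z = []
    · exact hnil hz (hz ▸ hBz) (hz ▸ .tau hss' hs' hd)
    · obtain ⟨z', hz', rfl⟩ := hss'.exists_step hz
      exact .tau (stepR_append_of_step hxnf hxne hz') (hp.trans hs' (hp.symm (hux z')))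
        (ih rfl hs')

end Transfer

theorem isRBisim_suffixEquiv (hR : R ⊆ Γ.GroundC) : Γ.IsRBisim R (Γ.SuffixEquiv R) := by
  have hp : Equivalence (Γ.SuffixEquiv R) := equivalence_suffixEquiv
  refine isRBisim_reflTransGen suffixLink_symm (fun _ _ h => .inl (rbisim_of_REq hR h)) ?_ ?_
  · rintro a b (hab | ⟨x, -, -, -, rfl⟩ | ⟨x, hx, -, -, rfl⟩) ha
    · exact hab.ground ha
    · exact (ground_append_iff.1 ha).1
    · exact ground_append_iff.2 ⟨ha, hx.symm.ground ReflTransGen.refl⟩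
  · rintro a b B α' ℓ (hab | ⟨x, hx, hxnf, hxne, rfl⟩ | ⟨x, hx, hxnf, hxne, rfl⟩) hbB hleave hd
    · exact RBisim.transfer hp (fun _ _ => .of_rbisim) hleave hab (hp.symm hbB) hd
    · exact .nf_of_append hR hx hxnf hxne hleave (hp.symm hbB)
        (by rwa [show nf R (b ++ x) = b ++ x from hxnf.append hxne b] at hd)
    · rw [show nf R (a ++ x) = a ++ x from hxnf.append hxne a]
      exact .append_of_nf hR hx hxnf hxne hleave (hp.trans (hp.symm hbB)
        (hp.trans (suffixEquiv_append hx hxnf hxne a) (.of_rbisim (rbisim_nf hR a)))) hd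

theorem rbisim_append_of_rbisim_nil (hR : R ⊆ Γ.GroundC) {x : List C}
    (hx : Γ.RBisim R x []) (z : List C) : Γ.RBisim R (z ++ x) z := by
  by_cases hxnf : nf R x = []
  · exact rbisim_of_nf_eq hR (nf_append_of_forall_mem z (nf_eq_nil_iff.1 hxnf))
  · have hzx : Γ.RBisim R (z ++ x) (z ++ nf R x) := rbisim_of_nf_eq hR (by
      rw [nf_append_of_nf_ne_nil z hxnf, nf_append_of_nf_ne_nil z (by rwa [nf_nf]), nf_nf])
    exact hzx.trans hR ⟨_, isRBisim_suffixEquiv hR, suffixEquiv_append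
      ((rbisim_nf hR x).symm.trans hR hx) (nf_nf x) hxnf z⟩

theorem rbisim_cons_nil_iff (hR : R ⊆ Γ.GroundC) {X : C} {t : List C} :
    Γ.RBisim R (X :: t) [] ↔ X ∈ Γ.IdR R ∧ Γ.RBisim R t [] := by
  constructor
  · intro h
    have hg : Γ.Ground ([X] ++ t) := h.symm.ground ReflTransGen.refl
    obtain ⟨hX, ht⟩ := ground_append_iff.1 hg
    have ht' : Γ.RBisim R t [] := rbisim_nil_of_tauStar hR h (TauStar.append hX t) ht
    exact ⟨(rbisim_append_of_rbisim_nil hR ht' [X]).symm.trans hR h, ht'⟩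
  · rintro ⟨hX, ht⟩
    exact (rbisim_append_of_rbisim_nil hR ht [X]).trans hR hX

end SuffixAbsorption

end BPA

theorem RBisim_eps_iff_IdR_general {C A : Type} (Γ : BPA C A)
    (R : Set C) (hR : R ⊆ Γ.GroundC) (α : List C) :
    Γ.RBisim R α [] ↔ ∀ X ∈ α, X ∈ Γ.IdR R := by
  induction α with
  | nil => simpa using BPA.rbisim_refl hR []
  | cons X t ih => rw [BPA.rbisim_cons_nil_iff hR, ih, List.forall_mem_cons]

/-- `α ≃_R ε` iff every constant occurring in `α` lies in `Id_R`. -/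
theorem RBisim_eps_iff_IdR {C A : Type} (Γ : BPA C A) (hΓ : Γ.Normed)
    (R : Set C) (hR : R ⊆ Γ.GroundC) (α : List C) :
    Γ.RBisim R α [] ↔ ∀ X ∈ α, X ∈ Γ.IdR R :=
  RBisim_eps_iff_IdR_general Γ R hR α
end
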